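/- arXiv:2302.02548 — 3 statements merged into one kernel-verified Lean document; each statement's English description precedes it below -/
import Mathlib

section
/- Let A ∈ ℝ^{m×n}, let S ∈ ℝ^{n×q} be a matrix whose columns have pairwise disjoint supports, and let z ∈ ℝ^q have all entries nonzero. If x = Sz is a global ℓ0 minimizer for (A, b) with b = Ax, then for every k ∈ {1,…,q} the column S_{·k} is a global ℓ0 minimizer for (A, A S_{·k}): every y ∈ ℝ^n with Ay = A S_{·k} satisfies ‖y‖₀ ≥ ‖S_{·k}‖₀. -/
/-- `‖v‖₀`, the number of nonzero entries of a vector. -/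
noncomputable def l0norm {ι : Type*} (v : ι → ℝ) : ℕ := Nat.card {i : ι // v i ≠ 0}

lemma l0norm_eq_card {n : ℕ} (v : Fin n → ℝ) :
    l0norm v = (Finset.univ.filter (fun i => v i ≠ 0)).card := by
  classical
  simp [l0norm, Nat.card_eq_fintype_card, Fintype.card_subtype]

/-- If the columns of `S` have pairwise disjoint supports, `z` has all
entries nonzero, and `x = S z` is a global ℓ0 minimizer of `A x' = A x`, then every
column `S_{·k}` is a global ℓ0 minimizer for `(A, A S_{·k})`. -/
theorem l0_min_split_global
    (m n q : ℕ) (A : Matrix (Fin m) (Fin n) ℝ) (S : Matrix (Fin n) (Fin q) ℝ)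
    (hSdisj : ∀ k l : Fin q, k ≠ l → ∀ i, S i k = 0 ∨ S i l = 0)
    (z : Fin q → ℝ) (hz : ∀ k, z k ≠ 0)
    (hmin : ∀ x' : Fin n → ℝ, A.mulVec x' = A.mulVec (S.mulVec z) →
      l0norm (S.mulVec z) ≤ l0norm x') :
    ∀ k : Fin q, ∀ y : Fin n → ℝ,
      A.mulVec y = A.mulVec (fun i => S i k) →
      l0norm (fun i => S i k) ≤ l0norm y := by
  classical
  intro k y hy
  set x' : Fin n → ℝ := fun i => S.mulVec z i - z k * S i k + z k * y i with hx'
  have hAx' : A.mulVec x' = A.mulVec (S.mulVec z) := by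
    have h1 : x' = S.mulVec z + z k • (y - fun i => S i k) := by
      funext i
      simp [hx', Pi.smul_apply, smul_eq_mul]
      ring
    rw [h1, Matrix.mulVec_add, Matrix.mulVec_smul, Matrix.mulVec_sub, hy]
    simp
  have hmin' := hmin x' hAx'
  -- key: if S i k ≠ 0 then (S z) i = S i k * z k
  have hSz : ∀ i, S i k ≠ 0 → S.mulVec z i = S i k * z k := by
    intro i hik
    show ∑ l, S i l * z l = S i k * z k
    refine Finset.sum_eq_single k (fun l _ hlk => ?_) (by simp)
    rcases hSdisj k l (Ne.symm hlk) i with h | h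
    · exact absurd h hik
    · simp [h]
  have hx'K : ∀ i, S i k ≠ 0 → x' i = z k * y i := by
    intro i hik
    simp only [hx', hSz i hik]
    ring
  have hx'nK : ∀ i, S i k = 0 → x' i = S.mulVec z i + z k * y i := by
    intro i hik
    simp [hx', hik]
  set T := Finset.univ.filter (fun i => S.mulVec z i ≠ 0) with hT
  set K := Finset.univ.filter (fun i => S i k ≠ 0) with hK
  set Y := Finset.univ.filter (fun i => y i ≠ 0) with hY
  have hKT : K ⊆ T := by
    intro i hi
    simp only [hK, Finset.mem_filter, Finset.mem_univ, true_and] at hi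
    simp only [hT, Finset.mem_filter, Finset.mem_univ, true_and, hSz i hi]
    exact mul_ne_zero hi (hz k)
  have hsub : Finset.univ.filter (fun i => x' i ≠ 0) ⊆ (T \ K) ∪ Y := by
    intro i hi
    simp only [Finset.mem_filter, Finset.mem_univ, true_and] at hi
    by_cases hyi : y i = 0
    · by_cases hik : S i k = 0
      · have := hx'nK i hik
        rw [this, hyi] at hi
        simp only [mul_zero, add_zero] at hi
        refine Finset.mem_union_left _ ?_
        simp [hT, hK, hi, hik]
      · exfalso
        have := hx'K i hik
        rw [this, hyi, mul_zero] at hi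
        exact hi rfl
    · exact Finset.mem_union_right _ (by simp [hY, hyi])
  have hcard : T.card ≤ (T \ K).card + Y.card := by
    calc T.card ≤ (Finset.univ.filter (fun i => x' i ≠ 0)).card := by
          rw [← l0norm_eq_card, ← l0norm_eq_card]; exact hmin'
      _ ≤ ((T \ K) ∪ Y).card := Finset.card_le_card hsub
      _ ≤ (T \ K).card + Y.card := Finset.card_union_le _ _
  have hsd : (T \ K).card = T.card - K.card := Finset.card_sdiff_of_subset hKT
  have hKle : K.card ≤ T.card := Finset.card_le_card hKT
  rw [l0norm_eq_card, l0norm_eq_card]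
  show K.card ≤ Y.card
  omega
end

section
/- In the block-random construction, for every u ∈ ℝ^p and every A ∈ ℝ^{m×n}: E‖A X u‖² = ‖A S Zᵀ u‖² + Σ_{l=1}^{q} ‖A D_{·J_l}‖_F² · ( ‖u_{K_l}‖² − ‖(Z Zᵀ)_{K_l K_l} u_{K_l}‖² ), where D_{·J} denotes the column submatrix of D indexed by J and ‖·‖_F denotes the Frobenius norm. -/
open MeasureTheory ProbabilityTheory Function Matrix

/-! Coordinate `i` of `A X u` is the constant `(A S Zᵀ u)_i` plus `∑_{j,k} (A D)_{ij} v_k R_{jk}` with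
`v = (I - Z Zᵀ) u`. The entries of `R` are independent and centred, so the second moment of that
coordinate is the squared constant plus `∑_{j,k} (A D)_{ij}² v_k² E R_{jk}²`, and `E R_{jk}²` is the
indicator of the blocks `J_l × K_l`. On `K_l`, `Z Zᵀ` is the orthogonal projection onto the unit
vector `Z_{·l}`, so `‖v_{K_l}‖² = ‖u_{K_l}‖² - ‖(Z Zᵀ)_{K_l K_l} u_{K_l}‖²` by Pythagoras. -/

theorem Matrix.mul_mulVec_apply_eq_sum {l m n : Type*} [Fintype m] [Fintype n]
    (M : Matrix l m ℝ) (N : Matrix m n ℝ) (w : n → ℝ) (i : l) :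
    ((M * N) *ᵥ w) i = ∑ jk : m × n, M i jk.1 * w jk.2 * N jk.1 jk.2 := by
  simp only [Matrix.mulVec, dotProduct, Matrix.mul_apply, Finset.sum_mul, Fintype.sum_prod_type]
  rw [Finset.sum_comm]
  exact Finset.sum_congr rfl fun j _ => Finset.sum_congr rfl fun k _ => by ring

theorem Matrix.mul_add_mul_mul_mulVec_apply {l m n : Type*} [Fintype m] [Fintype n]
    (A : Matrix l m ℝ) (M : Matrix m n ℝ) (D : Matrix m m ℝ) (N : Matrix m n ℝ)
    (P : Matrix n n ℝ) (u : n → ℝ) (i : l) :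
    ((A * (M + D * N * P)) *ᵥ u) i
      = ((A * M) *ᵥ u) i + ∑ jk : m × n, (A * D) i jk.1 * (P *ᵥ u) jk.2 * N jk.1 jk.2 := by
  rw [Matrix.mul_add, Matrix.add_mulVec, Pi.add_apply]
  congr 1
  rw [← Matrix.mul_assoc A (D * N), ← Matrix.mul_assoc A D, ← Matrix.mulVec_mulVec,
    Matrix.mul_mulVec_apply_eq_sum]

theorem sum_sq_sub_mul_sum_mul_eq {ι : Type*} (s : Finset ι) (z u : ι → ℝ)
    (hz : ∑ k ∈ s, z k ^ 2 = 1) :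
    ∑ k ∈ s, (u k - z k * ∑ k' ∈ s, z k' * u k') ^ 2
      = ∑ k ∈ s, u k ^ 2 - ∑ k ∈ s, (z k * ∑ k' ∈ s, z k' * u k') ^ 2 := by
  set c := ∑ k' ∈ s, z k' * u k'
  have hsq : ∑ k ∈ s, (z k * c) ^ 2 = c ^ 2 := by
    simp_rw [mul_pow, ← Finset.sum_mul, hz, one_mul]
  have hcross : ∑ k ∈ s, u k * (z k * c) = c ^ 2 := by
    simp_rw [← mul_assoc, ← Finset.sum_mul, mul_comm (u _), sq, c]
  simp_rw [sub_sq, Finset.sum_add_distrib, Finset.sum_sub_distrib, mul_assoc (2 : ℝ)]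
  rw [← Finset.mul_sum, hcross, hsq]
  ring

theorem sum_mul_mul_sum_boole_eq_sum_mul_sum {α β κ : Type*} [Fintype α] [Fintype β] [Fintype κ]
    [DecidableEq α] [DecidableEq β] (f : α → ℝ) (g : β → ℝ) (J : κ → Finset α)
    (K : κ → Finset β) :
    ∑ jk : α × β, f jk.1 * g jk.2 * ∑ l, (if jk.1 ∈ J l ∧ jk.2 ∈ K l then 1 else 0)
      = ∑ l, (∑ j ∈ J l, f j) * ∑ k ∈ K l, g k := by
  simp_rw [Finset.mul_sum, mul_ite, mul_one, mul_zero, ← Finset.mem_product]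
  rw [Finset.sum_comm]
  refine Finset.sum_congr rfl fun l _ => ?_
  rw [Finset.sum_ite_mem, Finset.univ_inter, Finset.sum_product, ← Finset.mul_sum,
    Finset.sum_mul_sum]

section BlockSupport

variable {ι κ : Type*} (Z : Matrix ι κ ℝ) (K : κ → Finset ι)

theorem Matrix.mul_transpose_apply_of_mem_block [Fintype κ] (hK : Pairwise (Disjoint on K))
    (hZ : ∀ l k, Z k l ≠ 0 → k ∈ K l) {l : κ} {k : ι} (hk : k ∈ K l) (k' : ι) :
    (Z * Z.transpose) k k' = Z k l * Z k' l := by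
  rw [Matrix.mul_apply, Finset.sum_eq_single l]
  · rfl
  · intro l' _ hl'
    by_contra h
    exact Finset.disjoint_left.mp (hK hl') (hZ l' k (left_ne_zero_of_mul h)) hk
  · simp

theorem sum_mul_eq_sum_block [Fintype ι] (hZ : ∀ l k, Z k l ≠ 0 → k ∈ K l) (l : κ)
    (f : ι → ℝ) : ∑ k, Z k l * f k = ∑ k ∈ K l, Z k l * f k := by
  refine (Finset.sum_subset (Finset.subset_univ _) fun k _ hk => ?_).symm
  rw [not_imp_comm.mp (hZ l k) hk, zero_mul]

theorem sum_block_mul_transpose_mul_eq [Fintype κ] (hK : Pairwise (Disjoint on K))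
    (hZ : ∀ l k, Z k l ≠ 0 → k ∈ K l) {l : κ} {k : ι} (hk : k ∈ K l) (f : ι → ℝ) :
    ∑ k' ∈ K l, (Z * Z.transpose) k k' * f k' = Z k l * ∑ k' ∈ K l, Z k' l * f k' := by
  rw [Finset.mul_sum]
  exact Finset.sum_congr rfl fun k' _ => by
    rw [Matrix.mul_transpose_apply_of_mem_block Z K hK hZ hk]; ring

theorem mul_transpose_mulVec_apply_of_mem_block [Fintype ι] [Fintype κ]
    (hK : Pairwise (Disjoint on K)) (hZ : ∀ l k, Z k l ≠ 0 → k ∈ K l) {l : κ} {k : ι}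
    (hk : k ∈ K l) (f : ι → ℝ) :
    ((Z * Z.transpose) *ᵥ f) k = Z k l * ∑ k' ∈ K l, Z k' l * f k' := by
  simp only [Matrix.mulVec, dotProduct, Matrix.mul_transpose_apply_of_mem_block Z K hK hZ hk,
    mul_assoc, ← Finset.mul_sum, sum_mul_eq_sum_block Z K hZ l]

theorem sum_block_sq_one_sub_mul_transpose_mulVec [Fintype ι] [DecidableEq ι] [Fintype κ]
    (hK : Pairwise (Disjoint on K)) (hZ : ∀ l k, Z k l ≠ 0 → k ∈ K l) {l : κ}
    (hZnorm : ∑ k, Z k l ^ 2 = 1) (u : ι → ℝ) :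
    ∑ k ∈ K l, ((1 - Z * Z.transpose) *ᵥ u) k ^ 2
      = ∑ k ∈ K l, u k ^ 2 - ∑ k ∈ K l, (∑ k' ∈ K l, (Z * Z.transpose) k k' * u k') ^ 2 := by
  have hnorm : ∑ k ∈ K l, Z k l ^ 2 = 1 := by
    simpa only [sq, sum_mul_eq_sum_block Z K hZ l] using hZnorm
  calc ∑ k ∈ K l, ((1 - Z * Z.transpose) *ᵥ u) k ^ 2
      = ∑ k ∈ K l, (u k - Z k l * ∑ k' ∈ K l, Z k' l * u k') ^ 2 :=
        Finset.sum_congr rfl fun k hk => by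
          rw [Matrix.sub_mulVec, Matrix.one_mulVec, Pi.sub_apply,
            mul_transpose_mulVec_apply_of_mem_block Z K hK hZ hk]
    _ = ∑ k ∈ K l, u k ^ 2 - ∑ k ∈ K l, (Z k l * ∑ k' ∈ K l, Z k' l * u k') ^ 2 :=
        sum_sq_sub_mul_sum_mul_eq (K l) (Z · l) u hnorm
    _ = _ := by
        congr 1
        exact Finset.sum_congr rfl fun k hk => by
          rw [sum_block_mul_transpose_mul_eq Z K hK hZ hk]

end BlockSupport

section SecondMoment

variable {Ω ι : Type*} [MeasurableSpace Ω] {μ : Measure Ω} [IsProbabilityMeasure μ] [Fintype ι]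

theorem memLp_const_add_sum_mul {ξ : ι → Ω → ℝ} (hL2 : ∀ i, MemLp (ξ i) 2 μ) (a : ℝ)
    (c : ι → ℝ) : MemLp (fun ω => a + ∑ i, c i * ξ i ω) 2 μ :=
  (memLp_const a).add (memLp_finsetSum _ fun i _ => (hL2 i).const_mul (c i))

theorem integral_sq_const_add_sum_mul_of_pairwise_indepFun {ξ : ι → Ω → ℝ}
    (hL2 : ∀ i, MemLp (ξ i) 2 μ) (hmean : ∀ i, μ[ξ i] = 0)
    (hind : Pairwise fun i j => ξ i ⟂ᵢ[μ] ξ j) (a : ℝ) (c : ι → ℝ) :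
    ∫ ω, (a + ∑ i, c i * ξ i ω) ^ 2 ∂μ = a ^ 2 + ∑ i, c i ^ 2 * ∫ ω, ξ i ω ^ 2 ∂μ := by
  set W : Ω → ℝ := ∑ i, c i • ξ i
  have hWapp : ∀ ω, W ω = ∑ i, c i * ξ i ω := fun ω => by simp [W]
  have hL2c : ∀ i, MemLp (c i • ξ i) 2 μ := fun i => (hL2 i).const_smul (c i)
  have hW : MemLp W 2 μ := memLp_finsetSum' _ fun i _ => hL2c i
  have hWmean : μ[W] = 0 := by
    simp_rw [hWapp]
    rw [integral_finsetSum _ fun i _ => ((hL2 i).integrable one_le_two).const_mul (c i)]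
    simp [integral_const_mul, hmean]
  have hvar : Var[W; μ] = ∑ i, c i ^ 2 * ∫ ω, ξ i ω ^ 2 ∂μ := by
    rw [IndepFun.variance_sum (fun i _ => hL2c i) fun i _ j _ hij =>
      (hind hij).comp (measurable_const_mul (c i)) (measurable_const_mul (c j))]
    refine Finset.sum_congr rfl fun i _ => ?_
    rw [variance_smul, variance_of_integral_eq_zero (hL2 i).aemeasurable (hmean i)]
  have hint : Integrable W μ := hW.integrable one_le_two
  calc ∫ ω, (a + ∑ i, c i * ξ i ω) ^ 2 ∂μ
      = ∫ ω, (a ^ 2 + 2 * a * W ω + W ω ^ 2) ∂μ := by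
        congr 1; funext ω; rw [hWapp]; ring
    _ = a ^ 2 + 2 * a * μ[W] + Var[W; μ] := by
        have hlin : Integrable (fun ω => a ^ 2 + 2 * a * W ω) μ :=
          (integrable_const _).add (hint.const_mul _)
        rw [integral_add hlin hW.integrable_sq,
          integral_add (integrable_const _) (hint.const_mul _), integral_const_mul,
          variance_of_integral_eq_zero hW.aemeasurable hWmean]
        simp
    _ = _ := by rw [hWmean, hvar]; ring

end SecondMoment

section BlockRandom

variable {Ω α β κ : Type*} {J : κ → Finset α} {K : κ → Finset β} {R : Ω → Matrix α β ℝ}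

theorem entry_eq_zero_of_not_mem_block
    (hRzero : ∀ j k, (∀ l, j ∉ J l ∨ k ∉ K l) → ∀ ω, R ω j k = 0) {j : α} {k : β}
    (h : ¬∃ l, j ∈ J l ∧ k ∈ K l) (ω : Ω) : R ω j k = 0 :=
  hRzero j k (fun l => not_and_or.mp fun hl => h ⟨l, hl⟩) ω

variable [MeasurableSpace Ω] {μ : Measure Ω}

theorem integral_entry_eq_zero
    (hRmean : ∀ l, ∀ j ∈ J l, ∀ k ∈ K l, ∫ ω, R ω j k ∂μ = 0)
    (hRzero : ∀ j k, (∀ l, j ∉ J l ∨ k ∉ K l) → ∀ ω, R ω j k = 0) (j : α) (k : β) :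
    ∫ ω, R ω j k ∂μ = 0 := by
  by_cases h : ∃ l, j ∈ J l ∧ k ∈ K l
  · obtain ⟨l, hj, hk⟩ := h
    exact hRmean l j hj k hk
  · simp [entry_eq_zero_of_not_mem_block hRzero h]

theorem memLp_entry [IsFiniteMeasure μ] (hRmeas : ∀ j k, Measurable fun ω => R ω j k)
    (hRvar : ∀ l, ∀ j ∈ J l, ∀ k ∈ K l, ∫ ω, R ω j k ^ 2 ∂μ = 1)
    (hRzero : ∀ j k, (∀ l, j ∉ J l ∨ k ∉ K l) → ∀ ω, R ω j k = 0) (j : α) (k : β) :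
    MemLp (fun ω => R ω j k) 2 μ := by
  by_cases h : ∃ l, j ∈ J l ∧ k ∈ K l
  · obtain ⟨l, hj, hk⟩ := h
    refine (memLp_two_iff_integrable_sq (hRmeas j k).aestronglyMeasurable).mpr ?_
    exact Integrable.of_integral_ne_zero (by rw [hRvar l j hj k hk]; exact one_ne_zero)
  · simp [entry_eq_zero_of_not_mem_block hRzero h]

/-- The sum over `l` has at most one nonzero term since the `J l` are disjoint; in this form the
block decomposition of the second moment is a plain exchange of sums. -/
theorem integral_entry_sq_eq_sum_boole [Fintype κ] [DecidableEq α] [DecidableEq β]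
    (hJ : Pairwise (Disjoint on J))
    (hRvar : ∀ l, ∀ j ∈ J l, ∀ k ∈ K l, ∫ ω, R ω j k ^ 2 ∂μ = 1)
    (hRzero : ∀ j k, (∀ l, j ∉ J l ∨ k ∉ K l) → ∀ ω, R ω j k = 0) (j : α) (k : β) :
    ∫ ω, R ω j k ^ 2 ∂μ = ∑ l, if j ∈ J l ∧ k ∈ K l then 1 else 0 := by
  by_cases h : ∃ l, j ∈ J l ∧ k ∈ K l
  · obtain ⟨l, hj, hk⟩ := h
    rw [hRvar l j hj k hk, Finset.sum_eq_single l, if_pos ⟨hj, hk⟩]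
    · intro l' _ hl'
      exact if_neg fun h' => Finset.disjoint_left.mp (hJ hl') h'.1 hj
    · simp
  · rw [Finset.sum_eq_zero fun l _ => if_neg fun hl => h ⟨l, hl⟩]
    simp [entry_eq_zero_of_not_mem_block hRzero h]

end BlockRandom

theorem X_expectation_general
    (m n p q : ℕ)
    (Ω : Type*) [MeasurableSpace Ω] (μ : Measure Ω) [IsProbabilityMeasure μ]
    -- S has nonzero columns with pairwise disjoint supports
    (S : Matrix (Fin n) (Fin q) ℝ)
    (hSdisj : ∀ l l' : Fin q, l ≠ l' → ∀ j, S j l = 0 ∨ S j l' = 0)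
    -- Z has ℓ2-normalized columns with pairwise disjoint supports
    (Z : Matrix (Fin p) (Fin q) ℝ)
    (hZnorm : ∀ l, ∑ k, (Z k l) ^ 2 = 1)
    -- J l = supp(S_{·l})
    (J : Fin q → Finset (Fin n)) (hJ : ∀ l j, j ∈ J l ↔ S j l ≠ 0)
    -- K is a partition of [p] with supp(Z_{·l}) ⊆ K l
    (K : Fin q → Finset (Fin p))
    (hKdisj : ∀ l l', l ≠ l' → Disjoint (K l) (K l'))
    (hZsupp : ∀ l k, Z k l ≠ 0 → k ∈ K l)
    -- R is random, independent mean-zero variance-one entries on the blocks J_l × K_l,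
    -- identically zero elsewhere
    (R : Ω → Matrix (Fin n) (Fin p) ℝ)
    (hRmeas : ∀ j k, Measurable (fun ω => R ω j k))
    (hRindep : iIndepFun
        (fun jk : Fin n × Fin p => fun ω => R ω jk.1 jk.2) μ)
    (hRmean : ∀ l : Fin q, ∀ j ∈ J l, ∀ k ∈ K l, ∫ ω, R ω j k ∂μ = 0)
    (hRvar : ∀ l : Fin q, ∀ j ∈ J l, ∀ k ∈ K l, ∫ ω, (R ω j k) ^ 2 ∂μ = 1)
    (hRzero : ∀ j k, (∀ l : Fin q, j ∉ J l ∨ k ∉ K l) → ∀ ω, R ω j k = 0)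
    (D : Matrix (Fin n) (Fin n) ℝ)
    (A : Matrix (Fin m) (Fin n) ℝ)
    (u : Fin p → ℝ) :
    ∫ ω, ∑ i,
        (((A * (S * Z.transpose + D * R ω * (1 - Z * Z.transpose))).mulVec u) i) ^ 2 ∂μ
      = (∑ i, (((A * S * Z.transpose).mulVec u) i) ^ 2)
        + ∑ l, (∑ i, ∑ j ∈ J l, ((A * D) i j) ^ 2)
            * ((∑ k ∈ K l, (u k) ^ 2)
                - ∑ k ∈ K l, (∑ k' ∈ K l, (Z * Z.transpose) k k' * u k') ^ 2) := by
  set a := (A * S * Z.transpose) *ᵥ u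
  set v := (1 - Z * Z.transpose) *ᵥ u
  set ξ : Fin n × Fin p → Ω → ℝ := fun jk ω => R ω jk.1 jk.2
  have hJdisj : Pairwise (Disjoint on J) := fun l l' hl =>
    Finset.disjoint_left.mpr fun j hj hj' =>
      (hSdisj l l' hl j).elim ((hJ l j).mp hj) ((hJ l' j).mp hj')
  have hL2 : ∀ jk, MemLp (ξ jk) 2 μ := fun jk => memLp_entry hRmeas hRvar hRzero jk.1 jk.2
  have hX : ∀ ω i, ((A * (S * Z.transpose + D * R ω * (1 - Z * Z.transpose))) *ᵥ u) i
      = a i + ∑ jk, (A * D) i jk.1 * v jk.2 * ξ jk ω := fun ω i => by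
    rw [Matrix.mul_add_mul_mul_mulVec_apply, ← Matrix.mul_assoc A S]
  have hvK : ∀ l, ∑ k ∈ K l, v k ^ 2 = ∑ k ∈ K l, u k ^ 2
      - ∑ k ∈ K l, (∑ k' ∈ K l, (Z * Z.transpose) k k' * u k') ^ 2 :=
    fun l => sum_block_sq_one_sub_mul_transpose_mulVec Z K (fun l l' hl => hKdisj l l' hl)
      hZsupp (hZnorm l) u
  calc _ = ∑ i, ∫ ω, (a i + ∑ jk, (A * D) i jk.1 * v jk.2 * ξ jk ω) ^ 2 ∂μ := by
        rw [← integral_finsetSum _ fun i _ => (memLp_const_add_sum_mul hL2 _ _).integrable_sq]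
        exact integral_congr_ae (ae_of_all _ fun ω => Finset.sum_congr rfl fun i _ => by rw [hX])
    _ = ∑ i, (a i ^ 2 + ∑ jk : Fin n × Fin p, ((A * D) i jk.1) ^ 2 * v jk.2 ^ 2
          * ∑ l, (if jk.1 ∈ J l ∧ jk.2 ∈ K l then 1 else 0)) := by
        refine Finset.sum_congr rfl fun i _ => ?_
        rw [integral_sq_const_add_sum_mul_of_pairwise_indepFun hL2
          (fun jk => integral_entry_eq_zero hRmean hRzero jk.1 jk.2)
          (fun _ _ h => hRindep.indepFun h)]
        congr 1
        refine Finset.sum_congr rfl fun jk _ => ?_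
        rw [integral_entry_sq_eq_sum_boole hJdisj hRvar hRzero, mul_pow]
    _ = _ := by
        rw [Finset.sum_add_distrib, Finset.sum_congr rfl fun i _ =>
          sum_mul_mul_sum_boole_eq_sum_mul_sum (fun j => (A * D) i j ^ 2) (fun k => v k ^ 2) J K,
          Finset.sum_comm]
        simp_rw [← Finset.sum_mul, hvK]

/-- In the block-random construction `X = S Zᵀ + D R (I − Z Zᵀ)`, for every
`u ∈ ℝ^p` and `A ∈ ℝ^{m×n}`:
`E‖A X u‖² = ‖A S Zᵀ u‖² + ∑_l ‖A D_{·J_l}‖_F² (‖u_{K_l}‖² − ‖(Z Zᵀ)_{K_l K_l} u_{K_l}‖²)`. -/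
theorem X_expectation
    (m n p q : ℕ)
    (Ω : Type*) [MeasurableSpace Ω] (μ : Measure Ω) [IsProbabilityMeasure μ]
    -- S has nonzero columns with pairwise disjoint supports
    (S : Matrix (Fin n) (Fin q) ℝ)
    (hScol : ∀ l, ∃ j, S j l ≠ 0)
    (hSdisj : ∀ l l' : Fin q, l ≠ l' → ∀ j, S j l = 0 ∨ S j l' = 0)
    -- Z has ℓ2-normalized columns with pairwise disjoint supports
    (Z : Matrix (Fin p) (Fin q) ℝ)
    (hZnorm : ∀ l, ∑ k, (Z k l) ^ 2 = 1)
    (hZdisj : ∀ l l' : Fin q, l ≠ l' → ∀ k, Z k l = 0 ∨ Z k l' = 0)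
    -- J l = supp(S_{·l})
    (J : Fin q → Finset (Fin n)) (hJ : ∀ l j, j ∈ J l ↔ S j l ≠ 0)
    -- K is a partition of [p] with supp(Z_{·l}) ⊆ K l
    (K : Fin q → Finset (Fin p))
    (hKdisj : ∀ l l', l ≠ l' → Disjoint (K l) (K l'))
    (hKcover : ∀ k, ∃ l, k ∈ K l)
    (hZsupp : ∀ l k, Z k l ≠ 0 → k ∈ K l)
    -- R is random, independent mean-zero variance-one entries on the blocks J_l × K_l,
    -- identically zero elsewhere
    (R : Ω → Matrix (Fin n) (Fin p) ℝ)
    (hRmeas : ∀ j k, Measurable (fun ω => R ω j k))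
    (hRindep : iIndepFun
        (fun jk : Fin n × Fin p => fun ω => R ω jk.1 jk.2) μ)
    (hRmean : ∀ l : Fin q, ∀ j ∈ J l, ∀ k ∈ K l, ∫ ω, R ω j k ∂μ = 0)
    (hRvar : ∀ l : Fin q, ∀ j ∈ J l, ∀ k ∈ K l, ∫ ω, (R ω j k) ^ 2 ∂μ = 1)
    (hRzero : ∀ j k, (∀ l : Fin q, j ∉ J l ∨ k ∉ K l) → ∀ ω, R ω j k = 0)
    -- D is diagonal
    (D : Matrix (Fin n) (Fin n) ℝ) (hDdiag : ∀ i j, i ≠ j → D i j = 0)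
    (A : Matrix (Fin m) (Fin n) ℝ)
    (u : Fin p → ℝ) :
    ∫ ω, ∑ i,
        (((A * (S * Z.transpose + D * R ω * (1 - Z * Z.transpose))).mulVec u) i) ^ 2 ∂μ
      = (∑ i, (((A * S * Z.transpose).mulVec u) i) ^ 2)
        + ∑ l, (∑ i, ∑ j ∈ J l, ((A * D) i j) ^ 2)
            * ((∑ k ∈ K l, (u k) ^ 2)
                - ∑ k ∈ K l, (∑ k' ∈ K l, (Z * Z.transpose) k k' * u k') ^ 2) :=
  X_expectation_general m n p q Ω μ S hSdisj Z hZnorm J hJ K hKdisj hZsupp R hRmeas hRindep hRmean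
    hRvar hRzero D A u
end

section
/- Let m ≥ q and let M ∈ ℝ^{m×q} have full column rank. Then there exists an invertible matrix T ∈ ℝ^{m×m} with condition number κ(T) = κ(M) such that T M has orthonormal columns, i.e., (TM)ᵀ(TM) = I_q. -/
/-!
Write `M = Q Σ Uᵀ` (thin SVD: `Q` has orthonormal columns, `U` is orthogonal and the `σᵢ` are the
square roots of the eigenvalues of `MᵀM`, positive by full column rank). The preconditioner
`T = Q Σ⁻¹ Qᵀ + σ_max⁻¹ (1 - Q Qᵀ)` undoes `Σ` on the range of `M` and scales its orthogonal
complement by `σ_max⁻¹`. Hence `T M = Q Uᵀ` has orthonormal columns, `T` is invertible with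
inverse `Q Σ Qᵀ + σ_max (1 - Q Qᵀ)`, and the singular values of `T` are the `σᵢ⁻¹` together with
`σ_max⁻¹`, so that `κ(T) = σ_min⁻¹ / σ_max⁻¹ = κ(M)`.
-/

noncomputable def eunorm {ι : Type*} [Fintype ι] (v : ι → ℝ) : ℝ :=
  Real.sqrt (∑ i, (v i) ^ 2)

/-- Largest singular value (spectral norm) of a matrix. -/
noncomputable def smax {ι κ : Type*} [Fintype ι] [Fintype κ]
    (A : Matrix ι κ ℝ) : ℝ :=
  sSup {c | ∃ v : κ → ℝ, eunorm v = 1 ∧ c = eunorm (A.mulVec v)}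

/-- Smallest singular value of a matrix (of full column rank). -/
noncomputable def smin {ι κ : Type*} [Fintype ι] [Fintype κ]
    (A : Matrix ι κ ℝ) : ℝ :=
  sInf {c | ∃ v : κ → ℝ, eunorm v = 1 ∧ c = eunorm (A.mulVec v)}

noncomputable def condNum {ι κ : Type*} [Fintype ι] [Fintype κ]
    (A : Matrix ι κ ℝ) : ℝ := smax A / smin A

open Matrix

section Eunorm

variable {ι ι' : Type*} [Fintype ι] [Fintype ι']

lemma eunorm_eq_sqrt_dotProduct (v : ι → ℝ) : eunorm v = √(v ⬝ᵥ v) := by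
  simp [eunorm, dotProduct, sq]

lemma eunorm_le_mul_eunorm {v : ι → ℝ} {w : ι' → ℝ} {b : ℝ} (hb : 0 ≤ b)
    (h : v ⬝ᵥ v ≤ b ^ 2 * (w ⬝ᵥ w)) : eunorm v ≤ b * eunorm w := by
  rw [eunorm_eq_sqrt_dotProduct, eunorm_eq_sqrt_dotProduct, ← Real.sqrt_sq hb,
    ← Real.sqrt_mul (sq_nonneg b)]
  exact Real.sqrt_le_sqrt h

lemma mul_eunorm_le_eunorm {v : ι → ℝ} {w : ι' → ℝ} {a : ℝ} (ha : 0 ≤ a)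
    (h : a ^ 2 * (w ⬝ᵥ w) ≤ v ⬝ᵥ v) : a * eunorm w ≤ eunorm v := by
  rw [eunorm_eq_sqrt_dotProduct, eunorm_eq_sqrt_dotProduct, ← Real.sqrt_sq ha,
    ← Real.sqrt_mul (sq_nonneg a)]
  exact Real.sqrt_le_sqrt h

lemma eunorm_single [DecidableEq ι] (k : ι) (a : ℝ) : eunorm (Pi.single k a) = |a| := by
  simp [eunorm_eq_sqrt_dotProduct, Real.sqrt_mul_self_eq_abs]

lemma dotProduct_mulVec_self (X : Matrix ι' ι ℝ) (v : ι → ℝ) :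
    (X *ᵥ v) ⬝ᵥ (X *ᵥ v) = v ⬝ᵥ (Xᵀ * X) *ᵥ v := by
  conv_rhs => rw [← mulVec_mulVec, dotProduct_mulVec, vecMul_transpose]

lemma eunorm_mulVec_of_transpose_mul_self [DecidableEq ι] {Q : Matrix ι' ι ℝ}
    (hQ : Qᵀ * Q = 1) (v : ι → ℝ) : eunorm (Q *ᵥ v) = eunorm v := by
  rw [eunorm_eq_sqrt_dotProduct, eunorm_eq_sqrt_dotProduct, dotProduct_mulVec_self, hQ,
    one_mulVec]

lemma eunorm_mulVec_single_one [DecidableEq ι] {Q : Matrix ι' ι ℝ} (hQ : Qᵀ * Q = 1) (k : ι) :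
    eunorm (Q *ᵥ Pi.single k 1) = 1 := by
  rw [eunorm_mulVec_of_transpose_mul_self hQ, eunorm_single, abs_one]

lemma eunorm_diagonal_mulVec_single [DecidableEq ι] (d : ι → ℝ) (k : ι) :
    eunorm (diagonal d *ᵥ Pi.single k 1) = |d k| := by
  rw [diagonal_mulVec_single, mul_one, eunorm_single]

end Eunorm

section SingularValues

variable {ι κ : Type*} [Fintype ι] [Fintype κ] {A : Matrix ι κ ℝ} {b : ℝ} {v : κ → ℝ}

lemma smax_eq_of_le_of_eq (hle : ∀ w, eunorm (A *ᵥ w) ≤ b * eunorm w) (hv : eunorm v = 1)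
    (hAv : eunorm (A *ᵥ v) = b) : smax A = b :=
  IsGreatest.csSup_eq ⟨⟨v, hv, hAv.symm⟩, by rintro _ ⟨w, hw, rfl⟩; simpa [hw] using hle w⟩

lemma smin_eq_of_le_of_eq (hle : ∀ w, b * eunorm w ≤ eunorm (A *ᵥ w)) (hv : eunorm v = 1)
    (hAv : eunorm (A *ᵥ v) = b) : smin A = b :=
  IsLeast.csInf_eq ⟨⟨v, hv, hAv.symm⟩, by rintro _ ⟨w, hw, rfl⟩; simpa [hw] using hle w⟩

end SingularValues

section Diagonal

variable {κ : Type*} [Fintype κ] [DecidableEq κ] {d : κ → ℝ} {a b : ℝ}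

lemma dotProduct_diagonal_mulVec_self (d x : κ → ℝ) :
    (diagonal d *ᵥ x) ⬝ᵥ (diagonal d *ᵥ x) = ∑ i, d i ^ 2 * (x i * x i) := by
  simp only [dotProduct, mulVec_diagonal]
  exact Finset.sum_congr rfl fun i _ => by ring

lemma dotProduct_diagonal_mulVec_self_le (hd : ∀ i, |d i| ≤ b) (x : κ → ℝ) :
    (diagonal d *ᵥ x) ⬝ᵥ (diagonal d *ᵥ x) ≤ b ^ 2 * (x ⬝ᵥ x) := by
  rw [dotProduct_diagonal_mulVec_self, dotProduct, Finset.mul_sum]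
  refine Finset.sum_le_sum fun i _ => mul_le_mul_of_nonneg_right ?_ (mul_self_nonneg _)
  simpa using pow_le_pow_left₀ (abs_nonneg _) (hd i) 2

lemma le_dotProduct_diagonal_mulVec_self (ha : 0 ≤ a) (hd : ∀ i, a ≤ |d i|) (x : κ → ℝ) :
    a ^ 2 * (x ⬝ᵥ x) ≤ (diagonal d *ᵥ x) ⬝ᵥ (diagonal d *ᵥ x) := by
  rw [dotProduct_diagonal_mulVec_self, dotProduct, Finset.mul_sum]
  refine Finset.sum_le_sum fun i _ => mul_le_mul_of_nonneg_right ?_ (mul_self_nonneg _)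
  simpa using pow_le_pow_left₀ ha (hd i) 2

end Diagonal

section FrameDiagonal

variable {ι κ : Type*} [Fintype κ] [DecidableEq ι] [DecidableEq κ]

/-- The symmetric matrix acting as `diagonal d` in the orthonormal frame formed by the columns
of `Q`, and as multiplication by `c` on the orthogonal complement of that frame. -/
noncomputable def frameDiagonal (Q : Matrix ι κ ℝ) (d : κ → ℝ) (c : ℝ) : Matrix ι ι ℝ :=
  Q * diagonal d * Qᵀ + c • (1 - Q * Qᵀ)

lemma frameDiagonal_one_one (Q : Matrix ι κ ℝ) : frameDiagonal Q 1 1 = 1 := by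
  simp [frameDiagonal]

variable [Fintype ι] {Q : Matrix ι κ ℝ} {d : κ → ℝ} {c a b : ℝ}

lemma frameDiagonal_mul_frameDiagonal (hQ : Qᵀ * Q = 1) (d d' : κ → ℝ) (c c' : ℝ) :
    frameDiagonal Q d c * frameDiagonal Q d' c' = frameDiagonal Q (d * d') (c * c') := by
  have hQQ : Q * Qᵀ * Q = Q := by rw [Matrix.mul_assoc, hQ, Matrix.mul_one]
  have hQQ' : Qᵀ * (Q * Qᵀ) = Qᵀ := by rw [← Matrix.mul_assoc, hQ, Matrix.one_mul]
  have hcompl : (1 - Q * Qᵀ) * Q = 0 := by rw [Matrix.sub_mul, hQQ, Matrix.one_mul, sub_self]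
  have hcompl' : Qᵀ * (1 - Q * Qᵀ) = 0 := by rw [Matrix.mul_sub, hQQ', Matrix.mul_one, sub_self]
  have hidem : (1 - Q * Qᵀ) * (1 - Q * Qᵀ) = 1 - Q * Qᵀ := by
    rw [Matrix.mul_sub, Matrix.mul_one, Matrix.sub_mul, Matrix.one_mul, Matrix.mul_assoc, hQQ',
      sub_self, sub_zero]
  simp only [frameDiagonal, add_mul, mul_add, Matrix.smul_mul, Matrix.mul_smul, hidem,
    Matrix.mul_assoc, hcompl', ← Matrix.mul_assoc (1 - Q * Qᵀ), hcompl, Matrix.zero_mul,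
    Matrix.mul_zero, smul_zero, add_zero, zero_add, smul_smul]
  rw [← Matrix.mul_assoc Qᵀ Q, hQ, Matrix.one_mul, ← Matrix.mul_assoc (diagonal d),
    diagonal_mul_diagonal, mul_comm c']
  rfl

lemma isUnit_frameDiagonal (hQ : Qᵀ * Q = 1) (hd : ∀ i, d i ≠ 0) (hc : c ≠ 0) :
    IsUnit (frameDiagonal Q d c) := by
  refine IsUnit.of_mul_eq_one (frameDiagonal Q d⁻¹ c⁻¹) ?_
  rw [frameDiagonal_mul_frameDiagonal hQ, mul_inv_cancel₀ hc, ← frameDiagonal_one_one Q]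
  congr
  exact funext fun i => mul_inv_cancel₀ (hd i)

lemma frameDiagonal_mul_self (hQ : Qᵀ * Q = 1) (d : κ → ℝ) (c : ℝ) :
    frameDiagonal Q d c * Q = Q * diagonal d := by
  rw [frameDiagonal, Matrix.add_mul, Matrix.smul_mul, Matrix.sub_mul, Matrix.one_mul,
    Matrix.mul_assoc Q Qᵀ, hQ, Matrix.mul_one, sub_self, smul_zero, add_zero, Matrix.mul_assoc,
    hQ, Matrix.mul_one]

lemma frameDiagonal_mulVec (d : κ → ℝ) (c : ℝ) (w : ι → ℝ) :
    frameDiagonal Q d c *ᵥ w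
      = Q *ᵥ (diagonal d *ᵥ (Qᵀ *ᵥ w)) + c • (w - Q *ᵥ (Qᵀ *ᵥ w)) := by
  rw [frameDiagonal, add_mulVec, smul_mulVec, sub_mulVec, one_mulVec, mulVec_mulVec,
    mulVec_mulVec, mulVec_mulVec, Matrix.mul_assoc]

lemma dotProduct_frameDiagonal_mulVec_self (hQ : Qᵀ * Q = 1) (d : κ → ℝ) (c : ℝ) (w : ι → ℝ) :
    (frameDiagonal Q d c *ᵥ w) ⬝ᵥ (frameDiagonal Q d c *ᵥ w)
      = (diagonal d *ᵥ (Qᵀ *ᵥ w)) ⬝ᵥ (diagonal d *ᵥ (Qᵀ *ᵥ w))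
        + c ^ 2 * ((w - Q *ᵥ (Qᵀ *ᵥ w)) ⬝ᵥ (w - Q *ᵥ (Qᵀ *ᵥ w))) := by
  set r := w - Q *ᵥ (Qᵀ *ᵥ w)
  have hr : Qᵀ *ᵥ r = 0 := by rw [mulVec_sub, mulVec_mulVec, hQ, one_mulVec, sub_self]
  have horth : ∀ z, (Q *ᵥ z) ⬝ᵥ r = 0 := fun z => by
    rw [dotProduct_comm, dotProduct_mulVec, ← transpose_transpose Q, vecMul_transpose, hr,
      zero_dotProduct]
  rw [frameDiagonal_mulVec, add_dotProduct, dotProduct_add, dotProduct_add, dotProduct_smul,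
    dotProduct_smul, smul_dotProduct, smul_dotProduct, horth, dotProduct_comm r, horth,
    dotProduct_mulVec_self, hQ, one_mulVec, smul_eq_mul, smul_eq_mul]
  ring

lemma dotProduct_self_eq_add_compl (hQ : Qᵀ * Q = 1) (w : ι → ℝ) :
    w ⬝ᵥ w = (Qᵀ *ᵥ w) ⬝ᵥ (Qᵀ *ᵥ w) + (w - Q *ᵥ (Qᵀ *ᵥ w)) ⬝ᵥ (w - Q *ᵥ (Qᵀ *ᵥ w)) := by
  simpa [frameDiagonal_one_one] using dotProduct_frameDiagonal_mulVec_self hQ 1 1 w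

lemma eunorm_frameDiagonal_mulVec_le (hQ : Qᵀ * Q = 1) (hd : ∀ i, |d i| ≤ b) (hc : |c| ≤ b)
    (w : ι → ℝ) : eunorm (frameDiagonal Q d c *ᵥ w) ≤ b * eunorm w := by
  refine eunorm_le_mul_eunorm ((abs_nonneg c).trans hc) ?_
  rw [dotProduct_frameDiagonal_mulVec_self hQ, dotProduct_self_eq_add_compl hQ w, mul_add]
  refine add_le_add (dotProduct_diagonal_mulVec_self_le hd _)
    (mul_le_mul_of_nonneg_right ?_ (Fintype.sum_nonneg fun _ => mul_self_nonneg _))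
  simpa using pow_le_pow_left₀ (abs_nonneg c) hc 2

lemma le_eunorm_frameDiagonal_mulVec (hQ : Qᵀ * Q = 1) (ha : 0 ≤ a) (hd : ∀ i, a ≤ |d i|)
    (hc : a ≤ |c|) (w : ι → ℝ) : a * eunorm w ≤ eunorm (frameDiagonal Q d c *ᵥ w) := by
  refine mul_eunorm_le_eunorm ha ?_
  rw [dotProduct_frameDiagonal_mulVec_self hQ, dotProduct_self_eq_add_compl hQ w, mul_add]
  refine add_le_add (le_dotProduct_diagonal_mulVec_self ha hd _)
    (mul_le_mul_of_nonneg_right ?_ (Fintype.sum_nonneg fun _ => mul_self_nonneg _))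
  simpa using pow_le_pow_left₀ ha hc 2

lemma frameDiagonal_mulVec_mulVec_single (hQ : Qᵀ * Q = 1) (d : κ → ℝ) (c : ℝ) (k : κ) :
    frameDiagonal Q d c *ᵥ (Q *ᵥ Pi.single k 1) = Q *ᵥ (diagonal d *ᵥ Pi.single k 1) := by
  rw [mulVec_mulVec, frameDiagonal_mul_self hQ, ← mulVec_mulVec]

lemma smax_frameDiagonal (hQ : Qᵀ * Q = 1) {k : κ} (hd : ∀ i, |d i| ≤ |d k|) (hc : |c| ≤ |d k|) :
    smax (frameDiagonal Q d c) = |d k| := by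
  refine smax_eq_of_le_of_eq (eunorm_frameDiagonal_mulVec_le hQ hd hc)
    (v := Q *ᵥ Pi.single k 1) ?_ ?_
  · exact eunorm_mulVec_single_one hQ k
  · rw [frameDiagonal_mulVec_mulVec_single hQ, eunorm_mulVec_of_transpose_mul_self hQ,
      eunorm_diagonal_mulVec_single]

lemma smin_frameDiagonal (hQ : Qᵀ * Q = 1) {k : κ} (hd : ∀ i, |d k| ≤ |d i|) (hc : |d k| ≤ |c|) :
    smin (frameDiagonal Q d c) = |d k| := by
  refine smin_eq_of_le_of_eq (le_eunorm_frameDiagonal_mulVec hQ (abs_nonneg _) hd hc)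
    (v := Q *ᵥ Pi.single k 1) ?_ ?_
  · exact eunorm_mulVec_single_one hQ k
  · rw [frameDiagonal_mulVec_mulVec_single hQ, eunorm_mulVec_of_transpose_mul_self hQ,
      eunorm_diagonal_mulVec_single]

end FrameDiagonal

section ThinSVD

lemma mulVec_injective_of_rank_eq {ι κ : Type*} [Fintype κ] {M : Matrix ι κ ℝ}
    (hM : M.rank = Fintype.card κ) :
    Function.Injective M.mulVec := by
  have h := LinearMap.finrank_range_add_finrank_ker M.mulVecLin
  rw [show Module.finrank ℝ (LinearMap.range M.mulVecLin) = Fintype.card κ from hM,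
    Module.finrank_fintype_fun_eq_card, add_eq_left, Submodule.finrank_eq_zero] at h
  exact LinearMap.ker_eq_bot.mp h

variable {ι κ : Type*} [Fintype ι] [Fintype κ] [DecidableEq κ]

lemma exists_thin_svd {M : Matrix ι κ ℝ} (hM : M.rank = Fintype.card κ) :
    ∃ (Q : Matrix ι κ ℝ) (s : κ → ℝ) (U : Matrix κ κ ℝ), Qᵀ * Q = 1 ∧ (∀ i, 0 < s i) ∧
      Uᵀ * U = 1 ∧ U * Uᵀ = 1 ∧ M = Q * diagonal s * Uᵀ := by
  have hA : (Mᵀ * M).PosDef := by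
    simpa using PosDef.conjTranspose_mul_self M (mulVec_injective_of_rank_eq hM)
  set U : Matrix κ κ ℝ := (hA.1.eigenvectorUnitary : Matrix κ κ ℝ)
  set s : κ → ℝ := fun i => √(hA.1.eigenvalues i)
  have hs : ∀ i, 0 < s i := fun i => Real.sqrt_pos.2 (hA.eigenvalues_pos i)
  have hU : Uᵀ * U = 1 := by
    simpa [star_eq_conjTranspose] using mem_unitaryGroup_iff'.mp hA.1.eigenvectorUnitary.2
  have hU' : U * Uᵀ = 1 := by
    simpa [star_eq_conjTranspose] using mem_unitaryGroup_iff.mp hA.1.eigenvectorUnitary.2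
  have hspec : Mᵀ * M = U * diagonal (s * s) * Uᵀ := by
    have hss : s * s = hA.1.eigenvalues :=
      funext fun i => Real.mul_self_sqrt (hA.eigenvalues_pos i).le
    rw [hss]
    simpa [star_eq_conjTranspose] using hA.1.spectral_theorem
  refine ⟨M * U * diagonal s⁻¹, s, U, ?_, hs, hU, hU', ?_⟩
  · calc (M * U * diagonal s⁻¹)ᵀ * (M * U * diagonal s⁻¹)
        = diagonal s⁻¹ * Uᵀ * (Mᵀ * M) * U * diagonal s⁻¹ := by
          simp only [transpose_mul, diagonal_transpose, Matrix.mul_assoc]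
      _ = diagonal s⁻¹ * (Uᵀ * U) * diagonal (s * s) * (Uᵀ * U) * diagonal s⁻¹ := by
          simp only [hspec, Matrix.mul_assoc]
      _ = 1 := by
          rw [hU, Matrix.mul_one, Matrix.mul_one, diagonal_mul_diagonal, diagonal_mul_diagonal,
            ← diagonal_one]
          congr 1 with i
          simp [field, (hs i).ne']
  · have hinv : (fun i => s⁻¹ i * s i) = fun _ => 1 :=
      funext fun i => inv_mul_cancel₀ (hs i).ne'
    rw [Matrix.mul_assoc M, Matrix.mul_assoc M, Matrix.mul_assoc U, diagonal_mul_diagonal, hinv,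
      diagonal_one, Matrix.mul_one, Matrix.mul_assoc, hU', Matrix.mul_one]

variable {Q : Matrix ι κ ℝ} {U : Matrix κ κ ℝ} {s : κ → ℝ} {k : κ}

lemma eunorm_mul_diagonal_mul_transpose_mulVec (hQ : Qᵀ * Q = 1) (v : κ → ℝ) :
    eunorm ((Q * diagonal s * Uᵀ) *ᵥ v) = eunorm (diagonal s *ᵥ (Uᵀ *ᵥ v)) := by
  rw [← mulVec_mulVec, ← mulVec_mulVec, eunorm_mulVec_of_transpose_mul_self hQ]

lemma smax_mul_diagonal_mul_transpose (hQ : Qᵀ * Q = 1) (hU : Uᵀ * U = 1) (hU' : U * Uᵀ = 1)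
    (hs : ∀ i, |s i| ≤ |s k|) : smax (Q * diagonal s * Uᵀ) = |s k| := by
  have hUt : Uᵀᵀ * Uᵀ = 1 := by rwa [transpose_transpose]
  refine smax_eq_of_le_of_eq (fun v => ?_) (eunorm_mulVec_single_one hU k) ?_
  · rw [eunorm_mul_diagonal_mul_transpose_mulVec hQ, ← eunorm_mulVec_of_transpose_mul_self hUt v]
    exact eunorm_le_mul_eunorm (abs_nonneg _) (dotProduct_diagonal_mulVec_self_le hs _)
  · rw [eunorm_mul_diagonal_mul_transpose_mulVec hQ, mulVec_mulVec _ Uᵀ, hU, one_mulVec,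
      eunorm_diagonal_mulVec_single]

lemma smin_mul_diagonal_mul_transpose (hQ : Qᵀ * Q = 1) (hU : Uᵀ * U = 1) (hU' : U * Uᵀ = 1)
    (hs : ∀ i, |s k| ≤ |s i|) : smin (Q * diagonal s * Uᵀ) = |s k| := by
  have hUt : Uᵀᵀ * Uᵀ = 1 := by rwa [transpose_transpose]
  refine smin_eq_of_le_of_eq (fun v => ?_) (eunorm_mulVec_single_one hU k) ?_
  · rw [eunorm_mul_diagonal_mul_transpose_mulVec hQ, ← eunorm_mulVec_of_transpose_mul_self hUt v]
    exact mul_eunorm_le_eunorm (abs_nonneg _)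
      (le_dotProduct_diagonal_mulVec_self (abs_nonneg _) hs _)
  · rw [eunorm_mul_diagonal_mul_transpose_mulVec hQ, mulVec_mulVec _ Uᵀ, hU, one_mulVec,
      eunorm_diagonal_mulVec_single]

end ThinSVD

section ConditionNumber

variable {ι κ : Type*} [Fintype ι] [Fintype κ] [DecidableEq κ] {Q : Matrix ι κ ℝ} {s : κ → ℝ}
  {kmax kmin : κ}

lemma condNum_mul_diagonal_mul_transpose {U : Matrix κ κ ℝ} (hQ : Qᵀ * Q = 1)
    (hU : Uᵀ * U = 1) (hU' : U * Uᵀ = 1) (hs : ∀ i, 0 < s i) (hmax : ∀ i, s i ≤ s kmax)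
    (hmin : ∀ i, s kmin ≤ s i) : condNum (Q * diagonal s * Uᵀ) = s kmax / s kmin := by
  have habs : ∀ i, |s i| = s i := fun i => abs_of_pos (hs i)
  rw [condNum, smax_mul_diagonal_mul_transpose hQ hU hU' (k := kmax) (by simpa only [habs]),
    smin_mul_diagonal_mul_transpose hQ hU hU' (k := kmin) (by simpa only [habs]), habs, habs]

lemma condNum_frameDiagonal_inv [DecidableEq ι] (hQ : Qᵀ * Q = 1) (hs : ∀ i, 0 < s i)
    (hmax : ∀ i, s i ≤ s kmax) (hmin : ∀ i, s kmin ≤ s i) :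
    condNum (frameDiagonal Q s⁻¹ (s kmax)⁻¹) = s kmax / s kmin := by
  have habs : ∀ i, |(s i)⁻¹| = (s i)⁻¹ := fun i => abs_of_pos (inv_pos.2 (hs i))
  have hmax' : ∀ i, |s⁻¹ kmax| ≤ |s⁻¹ i| := fun i => by
    simpa only [Pi.inv_apply, habs] using inv_anti₀ (hs i) (hmax i)
  have hmin' : ∀ i, |s⁻¹ i| ≤ |s⁻¹ kmin| := fun i => by
    simpa only [Pi.inv_apply, habs] using inv_anti₀ (hs kmin) (hmin i)
  rw [condNum, smax_frameDiagonal hQ (c := (s kmax)⁻¹) hmin' (hmin' kmax),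
    smin_frameDiagonal hQ (c := (s kmax)⁻¹) hmax' le_rfl]
  simp only [Pi.inv_apply, habs, inv_div_inv]

end ConditionNumber

theorem exists_orthogonalizing_preconditioner_general (m q : ℕ) (hq : 0 < q)
    (M : Matrix (Fin m) (Fin q) ℝ) (hrank : M.rank = q) :
    ∃ T : Matrix (Fin m) (Fin m) ℝ, IsUnit T ∧ condNum T = condNum M ∧
      (T * M).transpose * (T * M) = 1 := by
  obtain ⟨Q, s, U, hQ, hs, hU, hU', rfl⟩ := exists_thin_svd (M := M) (by rwa [Fintype.card_fin])
  have : Nonempty (Fin q) := ⟨⟨0, hq⟩⟩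
  obtain ⟨kmax, hkmax⟩ := Finite.exists_max s
  obtain ⟨kmin, hkmin⟩ := Finite.exists_min s
  refine ⟨frameDiagonal Q s⁻¹ (s kmax)⁻¹,
    isUnit_frameDiagonal hQ (fun i => (inv_pos.2 (hs i)).ne') (inv_pos.2 (hs kmax)).ne', ?_, ?_⟩
  · rw [condNum_frameDiagonal_inv hQ hs hkmax hkmin,
      condNum_mul_diagonal_mul_transpose hQ hU hU' hs hkmax hkmin]
  · have hTM : frameDiagonal Q s⁻¹ (s kmax)⁻¹ * (Q * diagonal s * Uᵀ) = Q * Uᵀ := by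
      have hinv : (fun i => s⁻¹ i * s i) = fun _ => 1 :=
        funext fun i => inv_mul_cancel₀ (hs i).ne'
      rw [← Matrix.mul_assoc, ← Matrix.mul_assoc, frameDiagonal_mul_self hQ, Matrix.mul_assoc Q,
        diagonal_mul_diagonal, hinv, diagonal_one, Matrix.mul_one]
    rw [hTM, transpose_mul, transpose_transpose, Matrix.mul_assoc, ← Matrix.mul_assoc Qᵀ, hQ,
      Matrix.one_mul, hU']

/-- If `M ∈ ℝ^{m×q}` with `m ≥ q` has full column rank, then there is an
invertible `T ∈ ℝ^{m×m}` with condition number `κ(T) = κ(M)` such that `T M` has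
orthonormal columns. -/
theorem exists_orthogonalizing_preconditioner (m q : ℕ) (hq : 0 < q) (hmq : q ≤ m)
    (M : Matrix (Fin m) (Fin q) ℝ) (hrank : M.rank = q) :
    ∃ T : Matrix (Fin m) (Fin m) ℝ, IsUnit T ∧ condNum T = condNum M ∧
      (T * M).transpose * (T * M) = 1 :=
  exists_orthogonalizing_preconditioner_general m q hq M hrank
end
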